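/- Let y ≥ 0, r satisfy yᵀA + rᵀ = 0 and yᵀb + rᵀ{ℓ',u'} > 0 with ℓ ≤ ℓ' ≤ u' ≤ u. Then the set {x : A x ≥ b, ℓ' ≤ x ≤ u'} is empty; moreover, computing the minimum activity of (yᵀA)x over the box [ℓ',u'] yields Σ_{j:(yᵀA)_j>0}(yᵀA)_j ℓ'_j + Σ_{j:(yᵀA)_j<0}(yᵀA)_j u'_j < yᵀb. -/

import Mathlib

/-! `boxVal r l u` is the minimum of `r ⬝ᵥ x` over the box `l ≤ x ≤ u`. For `x` in the local box,
weak duality gives `y ⬝ᵥ b ≤ (yᵀA) ⬝ᵥ x = -(r ⬝ᵥ x) ≤ -boxVal r l' u'`, contradicting `hpos`.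
Since `r = -(yᵀA)`, the minimum activity of `yᵀA` plus `boxVal r l' u'` is at most the value of
`yᵀA - yᵀA = 0` at the corner `l'`, hence it is below `y ⬝ᵥ b` as well. -/

open Matrix

noncomputable def boxVal {n : ℕ} (r l u : Fin n → ℝ) : ℝ :=
  ∑ j, if 0 < r j then r j * l j else r j * u j

theorem boxVal_le_dotProduct {n : ℕ} {r l u x : Fin n → ℝ} (hl : l ≤ x) (hu : x ≤ u) :
    boxVal r l u ≤ r ⬝ᵥ x := by
  refine Finset.sum_le_sum fun j _ => ?_
  split_ifs with hr
  · exact mul_le_mul_of_nonneg_left (hl j) hr.le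
  · exact mul_le_mul_of_nonpos_left (hu j) (not_lt.mp hr)

theorem boxVal_add_boxVal_neg_nonpos {n : ℕ} {l u : Fin n → ℝ} (c : Fin n → ℝ) (h : l ≤ u) :
    boxVal c l u + boxVal (-c) l u ≤ 0 := by
  have hc := boxVal_le_dotProduct (r := c) le_rfl h
  have hnc := boxVal_le_dotProduct (r := -c) le_rfl h
  rw [neg_dotProduct] at hnc
  linarith

theorem dotProduct_le_vecMul_dotProduct {m n : ℕ} {A : Matrix (Fin m) (Fin n) ℝ}
    {b y : Fin m → ℝ} {x : Fin n → ℝ} (hy : 0 ≤ y) (hb : b ≤ A *ᵥ x) :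
    y ⬝ᵥ b ≤ y ᵥ* A ⬝ᵥ x := by
  rw [← dotProduct_mulVec]
  exact Finset.sum_le_sum fun i _ => mul_le_mul_of_nonneg_left (hb i) (hy i)

theorem farkas_proof_local_infeasible_min_activity_general {m n : ℕ}
    (A : Matrix (Fin m) (Fin n) ℝ) (b : Fin m → ℝ)
    (l' u' : Fin n → ℝ) (h2 : l' ≤ u')
    (y : Fin m → ℝ) (r : Fin n → ℝ) (hy : 0 ≤ y)
    (hzero : A.vecMul y + r = 0)
    (hpos : 0 < y ⬝ᵥ b + boxVal r l' u') :
    (¬ ∃ x : Fin n → ℝ, b ≤ A.mulVec x ∧ l' ≤ x ∧ x ≤ u') ∧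
      (∑ j, if 0 < A.vecMul y j then A.vecMul y j * l' j
            else A.vecMul y j * u' j) < y ⬝ᵥ b := by
  obtain rfl : r = -A.vecMul y := eq_neg_of_add_eq_zero_right hzero
  constructor
  · rintro ⟨x, hb, hl, hu⟩
    have hdual := dotProduct_le_vecMul_dotProduct hy hb
    have hbox := boxVal_le_dotProduct (r := -A.vecMul y) hl hu
    rw [neg_dotProduct] at hbox
    linarith
  · change boxVal (A.vecMul y) l' u' < y ⬝ᵥ b
    linarith [boxVal_add_boxVal_neg_nonpos (A.vecMul y) h2]

/-- A Farkas proof w.r.t. local bounds shows the local subproblem is empty, and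
the minimum activity of the aggregated row `(yᵀA)x` over the local box is
strictly smaller than `yᵀb`. -/
theorem farkas_proof_local_infeasible_min_activity {m n : ℕ}
    (A : Matrix (Fin m) (Fin n) ℝ) (b : Fin m → ℝ)
    (l u l' u' : Fin n → ℝ) (h1 : l ≤ l') (h2 : l' ≤ u') (h3 : u' ≤ u)
    (y : Fin m → ℝ) (r : Fin n → ℝ) (hy : 0 ≤ y)
    (hzero : A.vecMul y + r = 0)
    (hpos : 0 < y ⬝ᵥ b + boxVal r l' u') :
    (¬ ∃ x : Fin n → ℝ, b ≤ A.mulVec x ∧ l' ≤ x ∧ x ≤ u') ∧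
      (∑ j, if 0 < A.vecMul y j then A.vecMul y j * l' j
            else A.vecMul y j * u' j) < y ⬝ᵥ b :=
  farkas_proof_local_infeasible_min_activity_general A b l' u' h2 y r hy hzero hpos
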